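/- arXiv:2105.04700 — 6 statements merged into one kernel-verified Lean document; each statement's English description precedes it below -/
import Mathlib

section
/- For any two vertices u and v in a graph G with maximum degree Δ, the sparsities satisfy ζ_u ≤ ζ_v + |N(v) \ N(u)|, where the sparsity ζ_w of a vertex w is (1/Δ)·(C(Δ,2) − m(N(w))) and m(S) is the number of edges with both endpoints in S. -/
open Finset

/-- Number of edges of `G` with both endpoints in `S` (as a rational, counted via
half the sum of internal degrees). -/
noncomputable def edgesIn {V : Type*} [Fintype V] [DecidableEq V] (G : SimpleGraph V)
    [DecidableRel G.Adj] (S : Finset V) : ℚ :=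
  (∑ u ∈ S, ((G.neighborFinset u ∩ S).card : ℚ)) / 2

/-- Local sparsity ζ_v = (1/Δ)·(Δ(Δ−1)/2 − m(N(v))). -/
noncomputable def sparsity {V : Type*} [Fintype V] [DecidableEq V] (G : SimpleGraph V)
    [DecidableRel G.Adj] (Δ : ℕ) (v : V) : ℚ :=
  ((Δ : ℚ) * ((Δ : ℚ) - 1) / 2 - edgesIn G (G.neighborFinset v)) / Δ

theorem stmt0 {V : Type*} [Fintype V] [DecidableEq V] (G : SimpleGraph V)
    [DecidableRel G.Adj] (Δ : ℕ) (hΔ : 1 ≤ Δ) (hdeg : ∀ w : V, G.degree w ≤ Δ)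
    (u v : V) :
    sparsity G Δ u ≤ sparsity G Δ v
      + ((G.neighborFinset v \ G.neighborFinset u).card : ℚ) := by
  set A := G.neighborFinset u with hA
  set B := G.neighborFinset v with hB
  have key : (∑ w ∈ B, (G.neighborFinset w ∩ B).card)
      ≤ (∑ w ∈ A, (G.neighborFinset w ∩ A).card) + 2 * Δ * (B \ A).card := by
    have hsplit : ∑ w ∈ B, (G.neighborFinset w ∩ B).card
        = ∑ w ∈ B ∩ A, (G.neighborFinset w ∩ B).card
          + ∑ w ∈ B \ A, (G.neighborFinset w ∩ B).card :=
      (Finset.sum_inter_add_sum_sdiff B A _).symm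
    have h1 : ∑ w ∈ B ∩ A, (G.neighborFinset w ∩ B).card
        ≤ ∑ w ∈ A, (G.neighborFinset w ∩ A).card + Δ * (B \ A).card := by
      calc ∑ w ∈ B ∩ A, (G.neighborFinset w ∩ B).card
          ≤ ∑ w ∈ B ∩ A, ((G.neighborFinset w ∩ A).card + (B \ A).card) := by
            apply Finset.sum_le_sum
            intro w _
            have hsub : G.neighborFinset w ∩ B ⊆ (G.neighborFinset w ∩ A) ∪ (B \ A) := by
              intro x hx
              simp only [Finset.mem_inter, Finset.mem_union, Finset.mem_sdiff] at *
              tauto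
            calc (G.neighborFinset w ∩ B).card
                ≤ ((G.neighborFinset w ∩ A) ∪ (B \ A)).card := Finset.card_le_card hsub
              _ ≤ _ := Finset.card_union_le _ _
        _ = ∑ w ∈ B ∩ A, (G.neighborFinset w ∩ A).card + (B ∩ A).card * (B \ A).card := by
            rw [Finset.sum_add_distrib, Finset.sum_const, smul_eq_mul]
        _ ≤ ∑ w ∈ A, (G.neighborFinset w ∩ A).card + Δ * (B \ A).card := by
            apply add_le_add
            · exact Finset.sum_le_sum_of_subset Finset.inter_subset_right
            · apply Nat.mul_le_mul_right
              calc (B ∩ A).card ≤ B.card := Finset.card_le_card Finset.inter_subset_left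
                _ = G.degree v := G.card_neighborFinset_eq_degree v
                _ ≤ Δ := hdeg v
    have h2 : ∑ w ∈ B \ A, (G.neighborFinset w ∩ B).card ≤ Δ * (B \ A).card := by
      calc ∑ w ∈ B \ A, (G.neighborFinset w ∩ B).card ≤ ∑ _w ∈ B \ A, Δ := by
            apply Finset.sum_le_sum
            intro w _
            calc (G.neighborFinset w ∩ B).card ≤ (G.neighborFinset w).card :=
                  Finset.card_le_card Finset.inter_subset_left
              _ = G.degree w := G.card_neighborFinset_eq_degree w
              _ ≤ Δ := hdeg w
        _ = (B \ A).card * Δ := by rw [Finset.sum_const, smul_eq_mul]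
        _ = Δ * (B \ A).card := Nat.mul_comm _ _
    rw [hsplit, two_mul, add_mul]
    omega
  have keyQ : (∑ w ∈ B, ((G.neighborFinset w ∩ B).card : ℚ))
      ≤ (∑ w ∈ A, ((G.neighborFinset w ∩ A).card : ℚ)) + 2 * Δ * (B \ A).card := by
    exact_mod_cast key
  have hΔpos : (0:ℚ) < Δ := by exact_mod_cast hΔ
  unfold sparsity edgesIn
  rw [div_le_iff₀ hΔpos, add_mul, div_mul_cancel₀ _ (ne_of_gt hΔpos)]
  rw [← hA, ← hB]
  linarith [keyQ]
end

section
/- Let G have maximum degree Δ and let C be an ε-almost-clique (i.e., |C| ≤ (1+ε)Δ and every v ∈ C has at least (1−ε)Δ neighbors inside C), with ε < 1/3. Then for every v ∈ C, the anti-degree a_v = |C \ (N(v) ∪ {v})| satisfies a_v ≤ 2ζ_v/(1−3ε), where ζ_v is the local sparsity of v. -/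
open Finset

/-!
Every anti-neighbour `w` of `v` in the almost-clique `C` sees at least `(1 - 3ε)Δ` vertices of
`N(v)`, because `N(v) ∩ C` and `N(w) ∩ C` are two large subsets of the small set `C`. Counting
the edges between `N(v)` and the anti-neighbours from the other side, each `u ∈ N(v)` has at most
`Δ - 1 - deg_{N(v)}(u)` such edges (it is also adjacent to `v`), so in total there are at most
`Δ(Δ - 1) - 2m(N(v)) = 2ζ_vΔ` of them. Hence `a_v (1 - 3ε)Δ ≤ 2ζ_vΔ`.
-/

theorem Finset.card_inter_add_card_inter_le {α : Type*} [DecidableEq α] (s t u : Finset α) :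
    #(s ∩ u) + #(t ∩ u) ≤ #u + #(s ∩ t) := by
  rw [← card_union_add_card_inter]
  exact add_le_add (card_le_card (union_subset inter_subset_right inter_subset_right))
    (card_le_card (inter_subset_inter inter_subset_left inter_subset_left))

namespace SimpleGraph

variable {V : Type*} [Fintype V] [DecidableEq V] (G : SimpleGraph V) [DecidableRel G.Adj]

theorem sum_card_inter_neighborFinset_comm (s t : Finset V) :
    ∑ w ∈ s, #(t ∩ G.neighborFinset w) = ∑ u ∈ t, #(s ∩ G.neighborFinset u) := by
  convert sum_card_bipartiteAbove_eq_sum_card_bipartiteBelow (r := G.Adj) (s := s) (t := t)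
    using 3 <;> ext <;> simp [bipartiteAbove, bipartiteBelow, adj_comm]

theorem two_mul_edgesIn (S : Finset V) :
    2 * edgesIn G S = ∑ u ∈ S, (#(G.neighborFinset u ∩ S) : ℚ) := by
  rw [edgesIn]
  ring

theorem two_mul_sparsity_mul {Δ : ℕ} (hΔ : Δ ≠ 0) (v : V) :
    2 * sparsity G Δ v * Δ = Δ * (Δ - 1) - 2 * edgesIn G (G.neighborFinset v) := by
  rw [sparsity]
  field_simp

/-- `N(u)` contains `v`, the part of `s` it sees, and `N(u) ∩ N(v)`, and these are disjoint. -/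
theorem card_inter_add_card_common_add_one_le_degree {s : Finset V} {u v : V} (huv : G.Adj u v)
    (hs : Disjoint s (insert v (G.neighborFinset v))) :
    #(s ∩ G.neighborFinset u) + #(G.neighborFinset u ∩ G.neighborFinset v) + 1 ≤ G.degree u := by
  have hdisj : Disjoint (s ∩ G.neighborFinset u) (G.neighborFinset u ∩ G.neighborFinset v) :=
    (hs.mono_left inter_subset_left).mono_right
      (inter_subset_right.trans (subset_insert v _))
  have hv : v ∉ (s ∩ G.neighborFinset u) ∪ (G.neighborFinset u ∩ G.neighborFinset v) := by
    simp only [mem_union, mem_inter, mem_neighborFinset, G.loopless.irrefl v, and_false, or_false]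
    exact fun h ↦ Finset.disjoint_left.mp hs h.1 (mem_insert_self v _)
  rw [← card_union_of_disjoint hdisj, ← card_insert_of_notMem hv,
    ← card_neighborFinset_eq_degree]
  refine card_le_card (insert_subset ((mem_neighborFinset G u v).mpr huv) ?_)
  exact union_subset inter_subset_right inter_subset_left

theorem sum_card_neighborFinset_inter_le_two_mul_sparsity_mul {Δ : ℕ} (hΔ : 1 ≤ Δ)
    (hdeg : ∀ w, G.degree w ≤ Δ) {s : Finset V} {v : V}
    (hs : Disjoint s (insert v (G.neighborFinset v))) :
    ∑ w ∈ s, (#(G.neighborFinset v ∩ G.neighborFinset w) : ℚ) ≤ 2 * sparsity G Δ v * Δ := by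
  rw [two_mul_sparsity_mul G (by omega), two_mul_edgesIn]
  set N := G.neighborFinset v
  have hcomm : ∑ w ∈ s, (#(N ∩ G.neighborFinset w) : ℚ)
      = ∑ u ∈ N, (#(s ∩ G.neighborFinset u) : ℚ) := by
    exact_mod_cast G.sum_card_inter_neighborFinset_comm s N
  have hbudget : ∀ u ∈ N,
      (#(s ∩ G.neighborFinset u) : ℚ) + #(G.neighborFinset u ∩ N) + 1 ≤ Δ := fun u hu ↦ by
    exact_mod_cast (G.card_inter_add_card_common_add_one_le_degree
      ((mem_neighborFinset G v u).mp hu).symm hs).trans (hdeg u)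
  have hsum := sum_le_sum hbudget
  simp only [sum_add_distrib, sum_const, nsmul_eq_mul, mul_one] at hsum
  have hN : (#N : ℚ) * (Δ - 1) ≤ Δ * (Δ - 1) := by
    refine mul_le_mul_of_nonneg_right ?_ (sub_nonneg.mpr (by exact_mod_cast hΔ))
    exact_mod_cast (G.card_neighborFinset_eq_degree v).trans_le (hdeg v)
  linarith

theorem le_card_neighborFinset_inter_of_almostClique {Δ : ℕ} {ε : ℚ} {C : Finset V}
    (hCcard : (#C : ℚ) ≤ (1 + ε) * Δ)
    (hCdeg : ∀ v ∈ C, (1 - ε) * Δ ≤ (#(G.neighborFinset v ∩ C) : ℚ))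
    {v w : V} (hv : v ∈ C) (hw : w ∈ C) :
    (1 - 3 * ε) * Δ ≤ (#(G.neighborFinset v ∩ G.neighborFinset w) : ℚ) := by
  have := card_inter_add_card_inter_le (G.neighborFinset v) (G.neighborFinset w) C
  have : (#(G.neighborFinset v ∩ C) : ℚ) + #(G.neighborFinset w ∩ C)
      ≤ #C + #(G.neighborFinset v ∩ G.neighborFinset w) := by exact_mod_cast this
  linarith [hCdeg v hv, hCdeg w hw]

end SimpleGraph

theorem stmt2_general {V : Type*} [Fintype V] [DecidableEq V] (G : SimpleGraph V)
    [DecidableRel G.Adj] (Δ : ℕ) (hΔ : 1 ≤ Δ) (hdeg : ∀ w : V, G.degree w ≤ Δ)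
    (ε : ℚ) (hε : ε < 1/3) (C : Finset V)
    (hCcard : (C.card : ℚ) ≤ (1 + ε) * Δ)
    (hCdeg : ∀ v ∈ C, (1 - ε) * Δ ≤ ((G.neighborFinset v ∩ C).card : ℚ))
    (v : V) (hv : v ∈ C) :
    ((C \ insert v (G.neighborFinset v)).card : ℚ)
      ≤ 2 * sparsity G Δ v / (1 - 3 * ε) := by
  set A := C \ insert v (G.neighborFinset v)
  have hcommon : ∀ w ∈ A, (1 - 3 * ε) * Δ ≤ (#(G.neighborFinset v ∩ G.neighborFinset w) : ℚ) :=
    fun w hw ↦ G.le_card_neighborFinset_inter_of_almostClique hCcard hCdeg hv (mem_sdiff.mp hw).1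
  have hcount : #A * ((1 - 3 * ε) * Δ) ≤ 2 * sparsity G Δ v * Δ := by
    simpa only [nsmul_eq_mul] using (card_nsmul_le_sum A _ _ hcommon).trans
      (G.sum_card_neighborFinset_inter_le_two_mul_sparsity_mul hΔ hdeg sdiff_disjoint)
  have hΔpos : (0 : ℚ) < Δ := by exact_mod_cast hΔ
  rw [le_div_iff₀ (by linarith), ← mul_le_mul_iff_of_pos_right hΔpos, mul_assoc]
  exact hcount

theorem stmt2 {V : Type*} [Fintype V] [DecidableEq V] (G : SimpleGraph V)
    [DecidableRel G.Adj] (Δ : ℕ) (hΔ : 1 ≤ Δ) (hdeg : ∀ w : V, G.degree w ≤ Δ)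
    (ε : ℚ) (hε0 : 0 < ε) (hε : ε < 1/3) (C : Finset V)
    (hCcard : (C.card : ℚ) ≤ (1 + ε) * Δ)
    (hCdeg : ∀ v ∈ C, (1 - ε) * Δ ≤ ((G.neighborFinset v ∩ C).card : ℚ))
    (v : V) (hv : v ∈ C) :
    ((C \ insert v (G.neighborFinset v)).card : ℚ)
      ≤ 2 * sparsity G Δ v / (1 - 3 * ε) :=
  stmt2_general G Δ hΔ hdeg ε hε C hCcard hCdeg v hv
end

section
/- Let G have maximum degree Δ, ε < 1/3, and let V be partitioned so that every vertex u in the 'sparse' part V_sp has sparsity ζ_u ≥ c·ε²·Δ for a constant 0 < c ≤ 1, and the rest is covered by ε-almost-cliques. Then for any vertex v in an almost-clique C, its external degree e_v = |N(v) \ C| satisfies e_v ≤ 4ζ_v/(c·ε²). -/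
/-!
Write `s_u = |N(v) \ N[u]|`. Counting non-adjacent pairs in `N(v)` gives
`∑_{u ∈ N(v)} s_u ≤ 2Δζ_v`, and comparing the edges of `N(u)` and `N(v)` through
`N(u) ∩ N(v)` gives `ζ_u ≤ ζ_v + s_u` for adjacent `u, v`.
If `4ζ_v ≥ cε²Δ` the bound follows from `e_v ≤ Δ`. Otherwise every external neighbour `u`
has `s_u ≥ cε²Δ/2`: a sparse `u` because `ζ_u ≥ cε²Δ`, and a `u` in another almost-clique
because `v` has `(1-ε)Δ` neighbours in `C` while `u` has at most `εΔ`. Summing over `E_v`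
gives `e_v · cε²Δ/2 ≤ 2Δζ_v`.
-/

open Finset

section

variable {V : Type*} [Fintype V] [DecidableEq V] (G : SimpleGraph V) [DecidableRel G.Adj]

lemma sum_card_neighborFinset_inter_comm (S T : Finset V) :
    ∑ x ∈ S, #(G.neighborFinset x ∩ T) = ∑ y ∈ T, #(G.neighborFinset y ∩ S) :=
  calc ∑ x ∈ S, #(G.neighborFinset x ∩ T) = ∑ x ∈ S, #(T.bipartiteAbove G.Adj x) := by
        congr! 2 with x; ext y; simp [bipartiteAbove, and_comm]
    _ = ∑ y ∈ T, #(S.bipartiteBelow G.Adj y) :=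
        sum_card_bipartiteAbove_eq_sum_card_bipartiteBelow _
    _ = ∑ y ∈ T, #(G.neighborFinset y ∩ S) := by
        congr! 2 with y; ext x; simp [bipartiteBelow, and_comm, G.adj_comm]

lemma sum_card_neighborFinset_inter_of_subset {S T : Finset V} (h : S ⊆ T) :
    ∑ x ∈ T, #(G.neighborFinset x ∩ T) = ∑ x ∈ S, #(G.neighborFinset x ∩ S)
      + ∑ x ∈ T \ S, (#(G.neighborFinset x ∩ T) + #(G.neighborFinset x ∩ S)) := by
  have hsplit : ∀ x, #(G.neighborFinset x ∩ T)
      = #(G.neighborFinset x ∩ S) + #(G.neighborFinset x ∩ (T \ S)) := by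
    intro x
    rw [← card_inter_add_card_sdiff (G.neighborFinset x ∩ T) S, inter_assoc,
      inter_eq_right.2 h, inter_sdiff_assoc]
  rw [← sum_sdiff h, sum_add_distrib, sum_congr (s₁ := S) rfl fun x _ => hsplit x,
    sum_add_distrib, sum_card_neighborFinset_inter_comm G S (T \ S)]
  ring

lemma two_mul_edgesIn_eq_of_subset {S T : Finset V} (h : S ⊆ T) :
    2 * edgesIn G T = 2 * edgesIn G S
      + ∑ x ∈ T \ S, ((#(G.neighborFinset x ∩ T) : ℚ) + #(G.neighborFinset x ∩ S)) := by
  simp only [edgesIn, mul_div_cancel₀ _ (two_ne_zero (α := ℚ))]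
  exact_mod_cast sum_card_neighborFinset_inter_of_subset G h

lemma sum_card_neighborFinset_inter_le {S T : Finset V} (h : S ⊆ T) (R : Finset V) :
    ∑ x ∈ R, (#(G.neighborFinset x ∩ S) : ℚ)
      ≤ ∑ x ∈ R, (#(G.neighborFinset x ∩ T) : ℚ) :=
  sum_le_sum fun _ _ => by exact_mod_cast card_le_card (inter_subset_inter_left h)

lemma edgesIn_le_add_sum_of_subset {S T : Finset V} (h : S ⊆ T) :
    edgesIn G T ≤ edgesIn G S + ∑ x ∈ T \ S, (#(G.neighborFinset x ∩ T) : ℚ) := by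
  have key := two_mul_edgesIn_eq_of_subset G h
  rw [sum_add_distrib] at key
  linarith [sum_card_neighborFinset_inter_le G h (T \ S)]

lemma edgesIn_add_sum_le_of_subset {S T : Finset V} (h : S ⊆ T) :
    edgesIn G S + ∑ x ∈ T \ S, (#(G.neighborFinset x ∩ S) : ℚ) ≤ edgesIn G T := by
  have key := two_mul_edgesIn_eq_of_subset G h
  rw [sum_add_distrib] at key
  linarith [sum_card_neighborFinset_inter_le G h (T \ S)]

/-- For `u ∈ N(v)` this is the paper's `N(v) \ N(u)` with `u` itself removed. -/
def exclusiveNbrs (v u : V) : Finset V := G.neighborFinset v \ insert u (G.neighborFinset u)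

variable {G} {u v : V}

lemma neighborFinset_sdiff_eq_insert_exclusiveNbrs (h : G.Adj v u) :
    G.neighborFinset v \ G.neighborFinset u = insert u (exclusiveNbrs G v u) := by
  ext w
  by_cases hw : w = u
  · subst hw; simp [exclusiveNbrs, h]
  · simp [exclusiveNbrs, hw]

lemma card_exclusiveNbrs_add_one (h : G.Adj v u) :
    #(exclusiveNbrs G v u) + 1 + #(G.neighborFinset u ∩ G.neighborFinset v) = G.degree v := by
  rw [← card_insert_of_notMem (s := exclusiveNbrs G v u) (a := u) (by simp [exclusiveNbrs]),
    ← neighborFinset_sdiff_eq_insert_exclusiveNbrs h, inter_comm, card_sdiff_add_card_inter,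
    G.card_neighborFinset_eq_degree]

lemma sparsity_le_sparsity_add_card_exclusiveNbrs {Δ : ℕ} (hdeg : ∀ w, G.degree w ≤ Δ)
    (h : G.Adj v u) : sparsity G Δ u ≤ sparsity G Δ v + #(exclusiveNbrs G v u) := by
  set I := G.neighborFinset u ∩ G.neighborFinset v
  have hΔ : (0 : ℚ) < Δ := by
    exact_mod_cast (G.degree_pos_iff_exists_adj v |>.2 ⟨u, h⟩).trans_le (hdeg v)
  -- `v ∈ N(u) \ I` is adjacent to all of `I`.
  have hu : edgesIn G I + #I ≤ edgesIn G (G.neighborFinset u) := by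
    refine le_trans ?_ (edgesIn_add_sum_le_of_subset G (S := I) inter_subset_left)
    gcongr
    have hvI : G.neighborFinset v ∩ I = I := inter_eq_right.2 inter_subset_right
    have hv : v ∈ G.neighborFinset u \ I := by simp [I, h.symm]
    simpa [hvI] using single_le_sum (f := fun x => (#(G.neighborFinset x ∩ I) : ℚ))
      (fun _ _ => by positivity) hv
  have hv : edgesIn G (G.neighborFinset v) ≤ edgesIn G I + #I + #(exclusiveNbrs G v u) * Δ := by
    refine (edgesIn_le_add_sum_of_subset G (S := I) inter_subset_right).trans ?_
    rw [sdiff_inter_self_right, neighborFinset_sdiff_eq_insert_exclusiveNbrs h,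
      sum_insert (by simp [exclusiveNbrs]), add_assoc]
    gcongr
    refine (sum_le_card_nsmul _ _ (Δ : ℚ) fun x _ => ?_).trans_eq (nsmul_eq_mul _ _)
    exact_mod_cast (card_le_card inter_subset_left).trans (hdeg x)
  rw [sparsity, sparsity, div_add' _ _ _ hΔ.ne', div_le_div_iff_of_pos_right hΔ]
  linarith

lemma sum_card_exclusiveNbrs_le_two_mul_sparsity {Δ : ℕ} (hΔ : 1 ≤ Δ)
    (hdeg : G.degree v ≤ Δ) :
    ∑ u ∈ G.neighborFinset v, (#(exclusiveNbrs G v u) : ℚ) ≤ 2 * Δ * sparsity G Δ v := by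
  have hcount : ∑ u ∈ G.neighborFinset v,
      (#(exclusiveNbrs G v u) + 1 + #(G.neighborFinset u ∩ G.neighborFinset v))
      = G.degree v * G.degree v := by
    rw [sum_congr rfl fun u hu => card_exclusiveNbrs_add_one ((G.mem_neighborFinset v u).1 hu),
      sum_const, G.card_neighborFinset_eq_degree, smul_eq_mul]
  simp only [sum_add_distrib, sum_const, G.card_neighborFinset_eq_degree, smul_eq_mul,
    mul_one] at hcount
  have hcount' := congrArg (Nat.cast (R := ℚ)) hcount
  push_cast at hcount'
  have hΔ' : (1 : ℚ) ≤ Δ := by exact_mod_cast hΔ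
  have hdeg' : (G.degree v : ℚ) ≤ Δ := by exact_mod_cast hdeg
  have hζ : 2 * Δ * sparsity G Δ v = Δ * (Δ - 1)
      - ∑ u ∈ G.neighborFinset v, (#(G.neighborFinset u ∩ G.neighborFinset v) : ℚ) := by
    rw [sparsity, edgesIn]
    field_simp
  nlinarith

lemma card_inter_le_card_exclusiveNbrs_add (C : Finset V) :
    #(G.neighborFinset v ∩ C) ≤ #(exclusiveNbrs G v u) + 1 + #(G.neighborFinset u ∩ C) := by
  have hsub : G.neighborFinset v ∩ C
      ⊆ insert u (exclusiveNbrs G v u ∪ G.neighborFinset u ∩ C) := by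
    intro w hw
    simp only [exclusiveNbrs, mem_insert, mem_union, mem_sdiff, mem_inter] at hw ⊢
    tauto
  calc #(G.neighborFinset v ∩ C)
        ≤ #(insert u (exclusiveNbrs G v u ∪ G.neighborFinset u ∩ C)) := card_le_card hsub
    _ ≤ #(exclusiveNbrs G v u ∪ G.neighborFinset u ∩ C) + 1 := card_insert_le _ _
    _ ≤ #(exclusiveNbrs G v u) + 1 + #(G.neighborFinset u ∩ C) := by
        have := card_union_le (exclusiveNbrs G v u) (G.neighborFinset u ∩ C)
        omega

variable {Δ : ℕ} {ε : ℚ} {C C' : Finset V}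

lemma card_neighborFinset_sdiff_le (hdeg : G.degree v ≤ Δ)
    (hC : (1 - ε) * Δ ≤ #(G.neighborFinset v ∩ C)) :
    (#(G.neighborFinset v \ C) : ℚ) ≤ ε * Δ := by
  have hsplit := card_sdiff_add_card_inter (G.neighborFinset v) C
  rw [G.card_neighborFinset_eq_degree] at hsplit
  have hsplit' : (#(G.neighborFinset v \ C) : ℚ) + #(G.neighborFinset v ∩ C) = G.degree v := by
    exact_mod_cast hsplit
  have hdeg' : (G.degree v : ℚ) ≤ Δ := by exact_mod_cast hdeg
  linarith

lemma le_card_exclusiveNbrs_of_disjoint (hCC' : Disjoint C' C) (hdeg : G.degree u ≤ Δ)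
    (hv : (1 - ε) * Δ ≤ #(G.neighborFinset v ∩ C))
    (hu : (1 - ε) * Δ ≤ #(G.neighborFinset u ∩ C')) :
    (1 - 2 * ε) * Δ - 1 ≤ #(exclusiveNbrs G v u) := by
  have hsplit : #(G.neighborFinset u ∩ C') + #(G.neighborFinset u ∩ C) ≤ G.degree u := by
    rw [← card_union_of_disjoint (hCC'.mono inter_subset_right inter_subset_right)]
    exact card_le_card (union_subset inter_subset_left inter_subset_left)
  have hsplit' : (#(G.neighborFinset u ∩ C') : ℚ) + #(G.neighborFinset u ∩ C) ≤ Δ := by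
    exact_mod_cast hsplit.trans hdeg
  have hvu : (#(G.neighborFinset v ∩ C) : ℚ)
      ≤ #(exclusiveNbrs G v u) + 1 + #(G.neighborFinset u ∩ C) := by
    exact_mod_cast card_inter_le_card_exclusiveNbrs_add C
  linarith

end

theorem stmt3_general {V : Type*} [Fintype V] [DecidableEq V] (G : SimpleGraph V)
    [DecidableRel G.Adj] (Δ : ℕ) (hΔ : 1 ≤ Δ) (hdeg : ∀ w : V, G.degree w ≤ Δ)
    (ε c : ℚ) (hε0 : 0 < ε) (hε : ε < 1/3) (hc0 : 0 < c) (hc1 : c ≤ 1)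
    (Vsp : Finset V) (𝒜 : Finset (Finset V))
    (hcover : ∀ u : V, u ∈ Vsp ∨ ∃ C' ∈ 𝒜, u ∈ C')
    (hpairwise : ∀ C' ∈ 𝒜, ∀ C'' ∈ 𝒜, C' ≠ C'' → Disjoint C' C'')
    (hsparse : ∀ u ∈ Vsp, c * ε ^ 2 * Δ ≤ sparsity G Δ u)
    (hACdeg : ∀ C' ∈ 𝒜, ∀ v ∈ C', (1 - ε) * Δ ≤ ((G.neighborFinset v ∩ C').card : ℚ))
    (C : Finset V) (hC : C ∈ 𝒜) (v : V) (hv : v ∈ C) :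
    ((G.neighborFinset v \ C).card : ℚ) ≤ 4 * sparsity G Δ v / (c * ε ^ 2) := by
  have hΔ0 : (0 : ℚ) < Δ := by exact_mod_cast hΔ
  have hext := card_neighborFinset_sdiff_le (hdeg v) (hACdeg C hC v hv)
  rw [le_div_iff₀ (by positivity)]
  rcases le_or_gt (c * ε ^ 2 * Δ) (4 * sparsity G Δ v) with hbig | hsmall
  · have hextΔ : (#(G.neighborFinset v \ C) : ℚ) ≤ Δ := by nlinarith
    calc (#(G.neighborFinset v \ C) : ℚ) * (c * ε ^ 2) ≤ Δ * (c * ε ^ 2) := by gcongr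
      _ ≤ 4 * sparsity G Δ v := by linarith
  have hmiss : ∀ u ∈ G.neighborFinset v \ C,
      c * ε ^ 2 * Δ / 2 ≤ #(exclusiveNbrs G v u) := by
    intro u hu
    obtain ⟨hadj, huC⟩ : G.Adj v u ∧ u ∉ C := by simpa using hu
    rcases hcover u with hsp | ⟨C', hC', huC'⟩
    · linarith [hsparse u hsp, sparsity_le_sparsity_add_card_exclusiveNbrs hdeg hadj,
        (by positivity : 0 ≤ c * ε ^ 2 * Δ)]
    · -- `u` forces `1 ≤ e_v ≤ εΔ`, so `Δ ≥ 4`, which absorbs the `-1` below.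
      have hΔ4 : (4 : ℚ) ≤ Δ := by
        have h1 : (1 : ℚ) ≤ ε * Δ := le_trans (by exact_mod_cast card_pos.2 ⟨u, hu⟩) hext
        have h3 : (3 : ℚ) < Δ := by nlinarith
        exact_mod_cast (show 3 < Δ by exact_mod_cast h3)
      have hCC' : Disjoint C' C := hpairwise C' hC' C hC (by rintro rfl; exact huC huC')
      have := le_card_exclusiveNbrs_of_disjoint hCC' (hdeg u) (hACdeg C hC v hv)
        (hACdeg C' hC' u huC')
      nlinarith [mul_le_mul_of_nonneg_right hc1 (sq_nonneg ε)]
  have hsum := (card_nsmul_le_sum _ _ _ hmiss).trans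
    ((sum_le_sum_of_subset_of_nonneg sdiff_subset fun _ _ _ => by positivity).trans
      (sum_card_exclusiveNbrs_le_two_mul_sparsity hΔ (hdeg v)))
  rw [nsmul_eq_mul] at hsum
  nlinarith

theorem stmt3 {V : Type*} [Fintype V] [DecidableEq V] (G : SimpleGraph V)
    [DecidableRel G.Adj] (Δ : ℕ) (hΔ : 1 ≤ Δ) (hdeg : ∀ w : V, G.degree w ≤ Δ)
    (ε c : ℚ) (hε0 : 0 < ε) (hε : ε < 1/3) (hc0 : 0 < c) (hc1 : c ≤ 1)
    (Vsp : Finset V) (𝒜 : Finset (Finset V))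
    (hcover : ∀ u : V, u ∈ Vsp ∨ ∃ C' ∈ 𝒜, u ∈ C')
    (hdisjsp : ∀ C' ∈ 𝒜, Disjoint Vsp C')
    (hpairwise : ∀ C' ∈ 𝒜, ∀ C'' ∈ 𝒜, C' ≠ C'' → Disjoint C' C'')
    (hsparse : ∀ u ∈ Vsp, c * ε ^ 2 * Δ ≤ sparsity G Δ u)
    (hACcard : ∀ C' ∈ 𝒜, ((C' : Finset V).card : ℚ) ≤ (1 + ε) * Δ)
    (hACdeg : ∀ C' ∈ 𝒜, ∀ v ∈ C', (1 - ε) * Δ ≤ ((G.neighborFinset v ∩ C').card : ℚ))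
    (C : Finset V) (hC : C ∈ 𝒜) (v : V) (hv : v ∈ C) :
    ((G.neighborFinset v \ C).card : ℚ) ≤ 4 * sparsity G Δ v / (c * ε ^ 2) :=
  stmt3_general G Δ hΔ hdeg ε c hε0 hε hc0 hc1 Vsp 𝒜 hcover hpairwise hsparse hACdeg C hC v hv
end

section
/- Let w be a vertex of a graph G with maximum degree Δ, and let ζ = ζ_w be its sparsity. Define O = A_w ∪ {u ∈ N(w) : |N(u) ∩ N(w)| < Δ − 5ζ} (where A_w is the set of non-neighbors of w in some almost-clique containing w). Then every u ∈ N(w) \ O with |N(u) ∩ N(w)| ≥ Δ − 5ζ satisfies ζ_u ≤ 6ζ. -/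
open Finset

theorem stmt4 {V : Type*} [Fintype V] [DecidableEq V] (G : SimpleGraph V)
    [DecidableRel G.Adj] (Δ : ℕ) (hΔ : 1 ≤ Δ) (hdeg : ∀ w : V, G.degree w ≤ Δ)
    (w u : V) (hu : u ∈ G.neighborFinset w)
    (hcommon : (Δ : ℚ) - 5 * sparsity G Δ w
      ≤ ((G.neighborFinset u ∩ G.neighborFinset w).card : ℚ)) :
    sparsity G Δ u ≤ 6 * sparsity G Δ w := by
  classical
  have hΔ0 : (0:ℚ) < (Δ:ℚ) := by exact_mod_cast hΔ
  have hΔ1 : (1:ℚ) ≤ (Δ:ℚ) := by exact_mod_cast hΔ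
  set Nu := G.neighborFinset u with hNudef
  set Nw := G.neighborFinset w with hNwdef
  set A := Nu ∩ Nw with hAdef
  set Eu : ℚ := ∑ x ∈ Nu, ((G.neighborFinset x ∩ Nu).card : ℚ) with hEu
  set Ew : ℚ := ∑ x ∈ Nw, ((G.neighborFinset x ∩ Nw).card : ℚ) with hEw
  have hNwD : (Nw.card : ℚ) ≤ (Δ:ℚ) := by
    have h1 : Nw.card ≤ Δ := by
      rw [hNwdef, G.card_neighborFinset_eq_degree]; exact hdeg w
    exact_mod_cast h1
  have hANw : A ⊆ Nw := inter_subset_right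
  have hANu : A ⊆ Nu := inter_subset_left
  have haNw : ((A.card : ℚ)) ≤ (Nw.card : ℚ) := by exact_mod_cast card_le_card hANw
  have haD : ((A.card : ℚ)) ≤ (Δ:ℚ) := haNw.trans hNwD
  have ha0 : (0:ℚ) ≤ (A.card : ℚ) := by positivity
  -- ζ identities
  have hzw : 2 * (Δ:ℚ) * sparsity G Δ w = (Δ:ℚ) * ((Δ:ℚ) - 1) - Ew := by
    rw [sparsity, edgesIn, ← hNwdef, ← hEw]
    field_simp
  have hzu : 2 * (Δ:ℚ) * sparsity G Δ u = (Δ:ℚ) * ((Δ:ℚ) - 1) - Eu := by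
    rw [sparsity, edgesIn, ← hNudef, ← hEu]
    field_simp
  -- Step 1: per-vertex bound for x ∈ A
  have hS1 : ∀ x ∈ A, ((G.neighborFinset x ∩ Nw).card : ℚ)
      ≤ ((G.neighborFinset x ∩ Nu).card : ℚ) + ((Δ:ℚ) - (A.card : ℚ)) := by
    intro x hx
    have hsub : G.neighborFinset x ∩ Nw ⊆ (G.neighborFinset x ∩ Nu) ∪ (Nw \ Nu) := by
      intro y hy
      rcases mem_inter.mp hy with ⟨hy1, hy2⟩
      by_cases hyu : y ∈ Nu
      · exact mem_union_left _ (mem_inter.mpr ⟨hy1, hyu⟩)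
      · exact mem_union_right _ (mem_sdiff.mpr ⟨hy2, hyu⟩)
    have hcard : (G.neighborFinset x ∩ Nw).card
        ≤ (G.neighborFinset x ∩ Nu).card + (Nw \ Nu).card :=
      (card_le_card hsub).trans (card_union_le _ _)
    have hsd : (Nw \ Nu).card + A.card = Nw.card := by
      have := card_sdiff_add_card_inter Nw Nu
      rwa [inter_comm, ← hAdef] at this
    have hsdQ : ((Nw \ Nu).card : ℚ) = (Nw.card : ℚ) - (A.card : ℚ) := by
      have h2 : ((Nw \ Nu).card : ℚ) + (A.card : ℚ) = (Nw.card : ℚ) := by exact_mod_cast hsd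
      linarith
    have hcardQ : ((G.neighborFinset x ∩ Nw).card : ℚ)
        ≤ ((G.neighborFinset x ∩ Nu).card : ℚ) + ((Nw \ Nu).card : ℚ) := by
      exact_mod_cast hcard
    rw [hsdQ] at hcardQ
    linarith
  -- Step 2: sum over A
  have hS2 : ∑ x ∈ A, ((G.neighborFinset x ∩ Nw).card : ℚ)
      ≤ (∑ x ∈ A, ((G.neighborFinset x ∩ Nu).card : ℚ))
        + (A.card : ℚ) * ((Δ:ℚ) - (A.card : ℚ)) := by
    calc ∑ x ∈ A, ((G.neighborFinset x ∩ Nw).card : ℚ)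
        ≤ ∑ x ∈ A, (((G.neighborFinset x ∩ Nu).card : ℚ) + ((Δ:ℚ) - (A.card : ℚ))) :=
          Finset.sum_le_sum hS1
      _ = (∑ x ∈ A, ((G.neighborFinset x ∩ Nu).card : ℚ))
            + (A.card : ℚ) * ((Δ:ℚ) - (A.card : ℚ)) := by
          rw [Finset.sum_add_distrib, Finset.sum_const, nsmul_eq_mul]
  -- Step 3: sum over A bounded by Eu
  have hS3 : ∑ x ∈ A, ((G.neighborFinset x ∩ Nu).card : ℚ) ≤ Eu := by
    rw [hEu]
    apply Finset.sum_le_sum_of_subset_of_nonneg hANu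
    intro x _ _
    positivity
  -- Step 4: Ew bounded using sum over A
  have hS4 : Ew ≤ (∑ x ∈ A, ((G.neighborFinset x ∩ Nw).card : ℚ))
      + ((Δ:ℚ) - (A.card : ℚ)) * ((Δ:ℚ) - 1) := by
    have hsplit : (∑ x ∈ Nw \ A, ((G.neighborFinset x ∩ Nw).card : ℚ))
        + ∑ x ∈ A, ((G.neighborFinset x ∩ Nw).card : ℚ) = Ew :=
      Finset.sum_sdiff hANw
    have hterm : ∀ x ∈ Nw \ A, ((G.neighborFinset x ∩ Nw).card : ℚ) ≤ (Δ:ℚ) - 1 := by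
      intro x hx
      have hxNw : x ∈ Nw := (mem_sdiff.mp hx).1
      have hsub : G.neighborFinset x ∩ Nw ⊆ Nw.erase x := by
        intro y hy
        rcases mem_inter.mp hy with ⟨hy1, hy2⟩
        have hadj : G.Adj x y := (G.mem_neighborFinset x y).mp hy1
        exact mem_erase.mpr ⟨(G.ne_of_adj hadj).symm, hy2⟩
      have hcard : (G.neighborFinset x ∩ Nw).card ≤ Nw.card - 1 := by
        have := card_le_card hsub
        rwa [card_erase_of_mem hxNw] at this
      have hpos : 1 ≤ Nw.card := card_pos.mpr ⟨x, hxNw⟩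
      have h3 : ((G.neighborFinset x ∩ Nw).card : ℚ) ≤ (Nw.card : ℚ) - 1 := by
        have h2 : ((G.neighborFinset x ∩ Nw).card : ℚ) ≤ ((Nw.card - 1 : ℕ) : ℚ) := by
          exact_mod_cast hcard
        rwa [Nat.cast_sub hpos] at h2
      linarith
    have hsum2 : (∑ x ∈ Nw \ A, ((G.neighborFinset x ∩ Nw).card : ℚ))
        ≤ (((Nw \ A).card : ℚ)) * ((Δ:ℚ) - 1) := by
      calc (∑ x ∈ Nw \ A, ((G.neighborFinset x ∩ Nw).card : ℚ))
          ≤ ∑ _x ∈ Nw \ A, ((Δ:ℚ) - 1) := Finset.sum_le_sum hterm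
        _ = (((Nw \ A).card : ℚ)) * ((Δ:ℚ) - 1) := by rw [Finset.sum_const, nsmul_eq_mul]
    have hcsd : (((Nw \ A).card : ℚ)) = (Nw.card : ℚ) - (A.card : ℚ) := by
      have h1 : (Nw \ A).card = Nw.card - A.card := card_sdiff_of_subset hANw
      have h2 : A.card ≤ Nw.card := card_le_card hANw
      rw [h1, Nat.cast_sub h2]
    have hD1 : (0:ℚ) ≤ (Δ:ℚ) - 1 := by linarith
    have hfinal : (∑ x ∈ Nw \ A, ((G.neighborFinset x ∩ Nw).card : ℚ))
        ≤ ((Δ:ℚ) - (A.card : ℚ)) * ((Δ:ℚ) - 1) := by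
      rw [hcsd] at hsum2
      have hmul : ((Nw.card : ℚ) - (A.card : ℚ)) * ((Δ:ℚ) - 1)
          ≤ ((Δ:ℚ) - (A.card : ℚ)) * ((Δ:ℚ) - 1) := by
        apply mul_le_mul_of_nonneg_right _ hD1
        linarith
      linarith
    linarith
  -- combine: Ew ≤ Eu + (D - a) * (D - 1 + a)
  have hring1 : (A.card : ℚ) * ((Δ:ℚ) - (A.card : ℚ))
      + ((Δ:ℚ) - (A.card : ℚ)) * ((Δ:ℚ) - 1)
      = ((Δ:ℚ) - (A.card : ℚ)) * ((Δ:ℚ) - 1 + (A.card : ℚ)) := by ring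
  have hchain : Ew ≤ Eu + ((Δ:ℚ) - (A.card : ℚ)) * ((Δ:ℚ) - 1 + (A.card : ℚ)) := by
    linarith [hS2, hS3, hS4]
  -- hcommon processed
  have hc2 : 2 * (Δ:ℚ) * (Δ:ℚ) - 5 * ((Δ:ℚ) * ((Δ:ℚ) - 1) - Ew)
      ≤ 2 * (Δ:ℚ) * (A.card : ℚ) := by
    have h1 := mul_le_mul_of_nonneg_left hcommon (by positivity : (0:ℚ) ≤ 2 * (Δ:ℚ))
    have h2 : 2 * (Δ:ℚ) * ((Δ:ℚ) - 5 * sparsity G Δ w)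
        = 2 * (Δ:ℚ) * (Δ:ℚ) - 5 * (2 * (Δ:ℚ) * sparsity G Δ w) := by ring
    rw [h2, hzw] at h1
    linarith
  have hsq : (0:ℚ) ≤ ((Δ:ℚ) - (A.card : ℚ)) * ((Δ:ℚ) + 1 - (A.card : ℚ)) :=
    mul_nonneg (by linarith) (by linarith)
  have hgoal2 : (Δ:ℚ) * ((Δ:ℚ) - 1) - Eu ≤ 6 * ((Δ:ℚ) * ((Δ:ℚ) - 1) - Ew) := by
    nlinarith [hchain, hc2, hsq]
  have hfin : (2 * (Δ:ℚ)) * sparsity G Δ u ≤ (2 * (Δ:ℚ)) * (6 * sparsity G Δ w) := by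
    have h6 : (2 * (Δ:ℚ)) * (6 * sparsity G Δ w) = 6 * (2 * (Δ:ℚ) * sparsity G Δ w) := by
      ring
    rw [h6, hzw]
    linarith [hzu, hgoal2]
  exact le_of_mul_le_mul_left hfin (by positivity)
end

section
/- Let integers k ≥ 2, t ≥ 2, Δ ≥ 64 + 12·ln(kt), and let D ≥ 4 be an integer with D < kΔ/(16 ln D). Then there exists a graph H on vertex set I_1 ⊔ … ⊔ I_t with |I_i| = D for all i, each I_i independent, with maximum degree at most Δ, such that H contains no k-independent transversal: there is no independent set S ⊆ V(H) with |S ∩ I_i| = k for all i. -/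
/-!
Let `K` be the complete `t`-partite graph on `Fin t × Fin D` and let `H` keep each edge of `K`
independently with probability `p = Δ / (2Dt)`; the probability of an edge set `E` is
`binomialWeight p K.edgeFinset E`. By Markov's inequality for `2 ^ deg v`, a vertex has degree
`> Δ` with probability at most `(1 + p) ^ deg v / 2 ^ (Δ + 1) ≤ e ^ (Δ / 2) / 2 ^ (Δ + 1)`,
and there are `tD ≤ e ^ (Δ / 6)` vertices. A `k`-transversal spans `k²t(t-1)/2` edges of `K`,
so it is independent in `H` with probability `(1 - p) ^ (k²t(t-1)/2) < D ^ (-2kt)`, and there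
are at most `D ^ (kt)` transversals. The union bound therefore leaves an outcome with none of
these events. If `Δ > 2Dt` then `p` is not a probability, but then `K` itself has maximum
degree `< tD < Δ`.
-/

open Finset

section BinomialWeight

variable {α : Type*} [DecidableEq α]

def binomialWeight (p : ℝ) (s E : Finset α) : ℝ := p ^ #E * (1 - p) ^ #(s \ E)

variable {p : ℝ} {s : Finset α}

lemma binomialWeight_nonneg (hp0 : 0 ≤ p) (hp1 : p ≤ 1) (E : Finset α) :
    0 ≤ binomialWeight p s E := by
  have : 0 ≤ 1 - p := by linarith
  unfold binomialWeight
  positivity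

lemma sum_binomialWeight (p : ℝ) (s : Finset α) :
    ∑ E ∈ s.powerset, binomialWeight p s E = 1 := by
  simpa [binomialWeight] using (prod_add (fun _ ↦ p) (fun _ ↦ 1 - p) s).symm

lemma sum_binomialWeight_disjoint {P : Finset α} (hP : P ⊆ s) :
    ∑ E ∈ s.powerset with Disjoint E P, binomialWeight p s E = (1 - p) ^ #P := by
  have hfilter : {E ∈ s.powerset | Disjoint E P} = (s \ P).powerset := by
    ext E; simp [subset_sdiff]
  have hweight : ∀ E ∈ (s \ P).powerset,
      binomialWeight p s E = (1 - p) ^ #P * binomialWeight p (s \ P) E := by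
    intro E hE
    have hEsP := mem_powerset.1 hE
    have hcard : #(s \ E) = #P + #((s \ P) \ E) := by
      have := card_le_card hEsP
      rw [card_sdiff_of_subset (hEsP.trans sdiff_subset), card_sdiff_of_subset hEsP,
        card_sdiff_of_subset hP] at *
      have := card_le_card hP
      omega
    rw [binomialWeight, binomialWeight, hcard, pow_add]
    ring
  rw [hfilter, sum_congr rfl hweight, ← mul_sum, sum_binomialWeight, mul_one]

lemma sum_two_pow_mul_binomialWeight (P : α → Prop) [DecidablePred P] :
    ∑ E ∈ s.powerset, 2 ^ #{e ∈ E | P e} * binomialWeight p s E = (1 + p) ^ #{e ∈ s | P e} := by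
  have hweight : ∀ E ∈ s.powerset, 2 ^ #{e ∈ E | P e} * binomialWeight p s E =
      (∏ e ∈ E, (if P e then 2 else 1) * p) * ∏ _e ∈ s \ E, (1 - p) := by
    intro E _
    rw [prod_mul_distrib, ← prod_filter, prod_const, prod_const, prod_const, binomialWeight]
    ring
  have hfactor : ∀ e ∈ s, (if P e then 2 else 1) * p + (1 - p) = if P e then 1 + p else 1 := by
    intro e _
    split_ifs <;> ring
  rw [sum_congr rfl hweight, ← prod_add, prod_congr rfl hfactor, ← prod_filter, prod_const]

lemma sum_binomialWeight_lt_card_filter (hp0 : 0 ≤ p) (hp1 : p ≤ 1) (P : α → Prop)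
    [DecidablePred P] (m : ℕ) :
    ∑ E ∈ s.powerset with m < #{e ∈ E | P e}, binomialWeight p s E ≤
      (1 + p) ^ #{e ∈ s | P e} / 2 ^ (m + 1) := by
  rw [le_div_iff₀ (by positivity), sum_mul, ← sum_two_pow_mul_binomialWeight P]
  calc ∑ E ∈ s.powerset with m < #{e ∈ E | P e}, binomialWeight p s E * 2 ^ (m + 1)
      ≤ ∑ E ∈ s.powerset with m < #{e ∈ E | P e},
          2 ^ #{e ∈ E | P e} * binomialWeight p s E := by
        refine sum_le_sum fun E hE ↦ ?_
        rw [mul_comm]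
        gcongr
        · exact binomialWeight_nonneg hp0 hp1 E
        · norm_num
        · exact (mem_filter.1 hE).2
    _ ≤ _ := sum_le_sum_of_subset_of_nonneg (filter_subset _ _) fun E _ _ ↦
        mul_nonneg (by positivity) (binomialWeight_nonneg hp0 hp1 E)

end BinomialWeight

theorem exists_forall_not_of_sum_lt {β ι : Type*} {X : Finset β} {w : β → ℝ}
    (hw : ∀ x ∈ X, 0 ≤ w x) (hX : ∑ x ∈ X, w x = 1) (I : Finset ι) (B : ι → β → Prop)
    [∀ i, DecidablePred (B i)] (h : ∑ i ∈ I, ∑ x ∈ X with B i x, w x < 1) :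
    ∃ x ∈ X, ∀ i ∈ I, ¬ B i x := by
  by_contra! hbad
  have hcover : ∑ x ∈ X, w x ≤ ∑ i ∈ I, ∑ x ∈ X with B i x, w x := by
    simp_rw [sum_filter]
    rw [sum_comm]
    refine sum_le_sum fun x hx ↦ ?_
    obtain ⟨i, hi, hB⟩ := hbad x hx
    calc w x = if B i x then w x else 0 := (if_pos hB).symm
      _ ≤ ∑ j ∈ I, if B j x then w x else 0 :=
        single_le_sum (f := fun j ↦ if B j x then w x else 0)
          (fun j _ ↦ by split_ifs <;> simp [hw x hx]) hi
  linarith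

namespace SimpleGraph

variable {V : Type*} [DecidableEq V]

lemma ncard_neighborSet_fromEdgeSet_le (E : Finset (Sym2 V)) (v : V) :
    ((fromEdgeSet (E : Set (Sym2 V))).neighborSet v).ncard ≤ #{e ∈ E | v ∈ e} := by
  rw [← Set.ncard_coe_finset]
  refine Set.ncard_le_ncard_of_injOn (fun w ↦ s(v, w)) (fun w hw ↦ ?_)
    (fun w _ w' _ h ↦ Sym2.congr_right.1 h) (finite_toSet _)
  simp only [mem_neighborSet, fromEdgeSet_adj, mem_coe] at hw
  exact mem_filter.2 ⟨hw.1, Sym2.mem_mk_left v w⟩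

lemma disjoint_edgeFinset_inter_sym2 [Fintype V] (G : SimpleGraph V) [DecidableRel G.Adj]
    {E : Finset (Sym2 V)} {S : Finset V} (hS : (fromEdgeSet (E : Set (Sym2 V))).IsIndepSet S) :
    Disjoint E (G.edgeFinset ∩ S.sym2) := by
  rw [Finset.disjoint_left]
  intro e heE he
  induction e using Sym2.ind with
  | h a b =>
    rw [mem_inter, mem_edgeFinset, mem_edgeSet, mk_mem_sym2_iff] at he
    obtain ⟨hab, ha, hb⟩ := he
    exact hS ha hb hab.ne ((fromEdgeSet_adj _).2 ⟨heE, hab.ne⟩)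

lemma two_mul_card_edgeFinset_inter_sym2 [Fintype V] (G : SimpleGraph V) [DecidableRel G.Adj]
    (S : Finset V) : 2 * #(G.edgeFinset ∩ S.sym2) = ∑ v ∈ S, #(G.neighborFinset v ∩ S) := by
  rw [← filter_edgeFinset_toFinset_subset, card_filter_edgeFinset_toFinset_subset,
    ← sum_degrees_eq_twice_card_edges, ← sum_coe_sort S]
  refine Fintype.sum_congr _ _ fun v ↦ ?_
  rw [← card_neighborFinset_eq_degree, ← card_map (.subtype (· ∈ (S : Set V)))]
  congr 1
  ext w
  simp [and_comm]

theorem exists_le_ncard_neighborSet_le_not_isIndepSet [Fintype V] (G : SimpleGraph V)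
    [DecidableRel G.Adj] {p : ℝ} (hp0 : 0 ≤ p) (hp1 : p ≤ 1) (Δ : ℕ) (𝒮 : Finset (Finset V))
    (h : ∑ v, (1 + p) ^ G.degree v / 2 ^ (Δ + 1) +
      ∑ S ∈ 𝒮, (1 - p) ^ #(G.edgeFinset ∩ S.sym2) < 1) :
    ∃ H ≤ G, (∀ v, (H.neighborSet v).ncard ≤ Δ) ∧ ∀ S ∈ 𝒮, ¬ H.IsIndepSet S := by
  classical
  let B : V ⊕ Finset V → Finset (Sym2 V) → Prop :=
    Sum.elim (fun v E ↦ Δ < #{e ∈ E | v ∈ e}) (fun S E ↦ Disjoint E (G.edgeFinset ∩ S.sym2))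
  have hbad : ∑ b ∈ univ.disjSum 𝒮, ∑ E ∈ G.edgeFinset.powerset with B b E,
      binomialWeight p G.edgeFinset E < 1 := by
    rw [sum_disjSum]
    refine lt_of_le_of_lt (add_le_add (sum_le_sum fun v _ ↦ ?_) (sum_le_sum fun S _ ↦ ?_)) h
    · have hdeg : #{e ∈ G.edgeFinset | v ∈ e} = G.degree v := by
        rw [← G.incidenceFinset_eq_filter, card_incidenceFinset_eq_degree]
      rw [← hdeg]
      convert sum_binomialWeight_lt_card_filter hp0 hp1 (v ∈ ·) Δ using 3 <;> rfl
    · convert (sum_binomialWeight_disjoint inter_subset_left).le using 3; rfl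
  obtain ⟨E, hE, hgood⟩ := exists_forall_not_of_sum_lt
    (fun E _ ↦ binomialWeight_nonneg hp0 hp1 E) (sum_binomialWeight _ _) _ B hbad
  refine ⟨fromEdgeSet E, ?_, fun v ↦ ?_, fun S hS hind ↦ ?_⟩
  · rw [← G.fromEdgeSet_edgeSet]
    exact fromEdgeSet_mono (by simpa [← coe_edgeFinset] using hE)
  · exact (ncard_neighborSet_fromEdgeSet_le E v).trans
      (not_lt.1 (hgood (.inl v) (inl_mem_disjSum.2 (mem_univ v))))
  · exact hgood (.inr S) (inr_mem_disjSum.2 hS) (G.disjoint_edgeFinset_inter_sym2 hind)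

end SimpleGraph

section CompleteMultipartite

def transversals (ι β : Type*) [Fintype ι] [DecidableEq ι] [Fintype β] [DecidableEq β] (k : ℕ) :
    Finset (Finset (ι × β)) :=
  {S | ∀ i, #{v ∈ S | v.1 = i} = k}

variable {ι β : Type*}

def completeMultipartiteProd (ι β : Type*) : SimpleGraph (ι × β) :=
  (⊤ : SimpleGraph ι).comap Prod.fst

@[simp]
lemma completeMultipartiteProd_adj {u v : ι × β} :
    (completeMultipartiteProd ι β).Adj u v ↔ u.1 ≠ v.1 := by
  simp [completeMultipartiteProd]

variable [DecidableEq ι] [Fintype ι] [Fintype β] [DecidableEq β]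

instance : DecidableRel (completeMultipartiteProd ι β).Adj :=
  fun _ _ ↦ decidable_of_iff _ completeMultipartiteProd_adj.symm

lemma card_transversals_le (k : ℕ) :
    #(transversals ι β k) ≤ Fintype.card β ^ (k * Fintype.card ι) := by
  let fibre (S : Finset (ι × β)) (i : ι) : Finset β := {b | (i, b) ∈ S}
  have hfibre (S : Finset (ι × β)) (i : ι) : #(fibre S i) = #{v ∈ S | v.1 = i} := by
    refine card_nbij' (fun b ↦ (i, b)) Prod.snd ?_ ?_ ?_ ?_ <;> intro x hx <;>
      simp only [fibre, coe_filter, Set.mem_ofPred_eq, mem_univ, true_and] at hx ⊢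
    · exact ⟨hx, trivial⟩
    · exact hx.2 ▸ hx.1
    · exact Prod.ext hx.2.symm rfl
  have hmaps : Set.MapsTo fibre (transversals ι β k : Set (Finset (ι × β)))
      (Fintype.piFinset fun _ : ι ↦ powersetCard k (univ : Finset β) : Set (ι → Finset β)) := by
    intro S hS
    simp only [transversals, coe_filter, mem_univ, true_and, Set.mem_ofPred_eq] at hS
    simpa [hfibre] using hS
  have hinj : Set.InjOn fibre (transversals ι β k : Set (Finset (ι × β))) := by
    intro S _ S' _ h
    ext v
    simpa [fibre] using congrArg (v.2 ∈ · v.1) h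
  calc #(transversals ι β k)
      ≤ #(Fintype.piFinset fun _ : ι ↦ powersetCard k (univ : Finset β)) :=
        card_le_card_of_injOn _ hmaps hinj
    _ = (Fintype.card β).choose k ^ Fintype.card ι := by simp
    _ ≤ (Fintype.card β ^ k) ^ Fintype.card ι := by gcongr; exact Nat.choose_le_pow _ _
    _ = Fintype.card β ^ (k * Fintype.card ι) := (pow_mul _ _ _).symm

lemma two_mul_card_edgeFinset_inter_sym2_of_mem_transversals {k : ℕ} {S : Finset (ι × β)}
    (hS : S ∈ transversals ι β k) :
    2 * #((completeMultipartiteProd ι β).edgeFinset ∩ S.sym2) =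
      Fintype.card ι * k * ((Fintype.card ι - 1) * k) := by
  simp only [transversals, mem_filter, mem_univ, true_and] at hS
  have hcard : #S = Fintype.card ι * k := by
    rw [card_eq_sum_card_fiberwise (f := Prod.fst) (t := univ) (fun _ _ ↦ mem_coe.2 (mem_univ _))]
    simp [hS]
  have hdeg : ∀ v ∈ S, #((completeMultipartiteProd ι β).neighborFinset v ∩ S) = #S - k := by
    intro v _
    have hnbr : (completeMultipartiteProd ι β).neighborFinset v ∩ S = {w ∈ S | ¬ w.1 = v.1} := by
      ext w
      simp [and_comm, eq_comm]
    have hsplit := card_filter_add_card_filter_not (s := S) (fun w ↦ w.1 = v.1)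
    rw [hnbr, ← hsplit, hS v.1, Nat.add_sub_cancel_left]
  rw [SimpleGraph.two_mul_card_edgeFinset_inter_sym2, sum_congr rfl hdeg, sum_const, hcard,
    smul_eq_mul, Nat.sub_one_mul]

lemma not_isIndepSet_of_mem_transversals {k : ℕ} (hk : 0 < k) (hι : 1 < Fintype.card ι)
    {S : Finset (ι × β)} (hS : S ∈ transversals ι β k) :
    ¬ (completeMultipartiteProd ι β).IsIndepSet S := by
  simp only [transversals, mem_filter, mem_univ, true_and] at hS
  obtain ⟨i, j, hij⟩ := Fintype.exists_pair_of_one_lt_card hι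
  obtain ⟨a, ha⟩ := card_pos.1 ((hS i).symm ▸ hk)
  obtain ⟨b, hb⟩ := card_pos.1 ((hS j).symm ▸ hk)
  rw [mem_filter] at ha hb
  exact fun hind ↦ hind ha.1 hb.1 (fun hab ↦ hij (ha.2 ▸ hb.2 ▸ congrArg Prod.fst hab))
    (completeMultipartiteProd_adj.2 (ha.2 ▸ hb.2 ▸ hij))

end CompleteMultipartite

section Estimates

open Real

lemma log_le_div_twelve {x : ℝ} (hx : 64 ≤ x) : log x ≤ x / 12 := by
  have hsplit : log x = 6 * log 2 + log (x / 64) := by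
    rw [← log_rpow two_pos, ← log_mul (by positivity) (by positivity)]
    norm_num
    ring_nf
  linarith [log_le_sub_one_of_pos (show 0 < x / 64 by positivity), log_two_lt_d9]

lemma exp_mul_le_two_pow (Δ : ℕ) : exp (2 / 3 * Δ) ≤ 2 ^ Δ := by
  have hexp : exp (2 / 3) ≤ 2 := by
    rw [← le_log_iff_exp_le two_pos]
    linarith [log_two_gt_d9]
  rw [mul_comm, exp_nat_mul]
  exact pow_le_pow_left₀ (exp_nonneg _) hexp Δ

lemma mul_le_exp_div_six {k t Δ D : ℕ} (hk : 1 ≤ k) (ht : 1 ≤ t) (hD2 : 2 ≤ D)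
    (hΔ : 64 + 12 * log (k * t) ≤ Δ) (hD : (D : ℝ) < k * Δ / (16 * log D)) :
    (t * D : ℝ) ≤ exp (Δ / 6) := by
  have hkR : (1 : ℝ) ≤ k := by exact_mod_cast hk
  have htR : (1 : ℝ) ≤ t := by exact_mod_cast ht
  have hDR : (2 : ℝ) ≤ D := by exact_mod_cast hD2
  have hΔ64 : (64 : ℝ) ≤ Δ := by
    linarith [log_nonneg (one_le_mul_of_one_le_of_one_le hkR htR)]
  have hlogD : log 2 ≤ log D := log_le_log two_pos hDR
  have hDkΔ : (D : ℝ) ≤ k * Δ :=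
    hD.le.trans (div_le_self (by positivity) (by linarith [log_two_gt_d9]))
  rw [← exp_log (by positivity : (0 : ℝ) < t * D)]
  refine exp_le_exp.2 ?_
  have hlog := log_le_log (by positivity) hDkΔ
  rw [log_mul (by positivity) (by positivity)] at hlog hΔ ⊢
  linarith [log_le_div_twelve hΔ64]

lemma two_mul_log_lt {k t Δ D : ℕ} (hk : 1 ≤ k) (ht : 2 ≤ t) (hD2 : 2 ≤ D)
    (hD : (D : ℝ) < k * Δ / (16 * log D)) :
    2 * (k * t * log D) < Δ / (2 * D * t) * (t * k * ((t - 1) * k) / 2) := by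
  have hkR : (1 : ℝ) ≤ k := by exact_mod_cast hk
  have htR : (2 : ℝ) ≤ t := by exact_mod_cast ht
  have hDR : (2 : ℝ) ≤ D := by exact_mod_cast hD2
  have hlogD : 0 < log D := log_pos (by linarith)
  have h16 : 16 * D * log D < k * Δ := by
    rw [lt_div_iff₀ (by positivity)] at hD
    linarith
  have hrewrite : (Δ : ℝ) / (2 * D * t) * (t * k * ((t - 1) * k) / 2) =
      k * Δ * (k * (t - 1)) / (4 * D) := by
    field_simp
    ring
  rw [hrewrite, lt_div_iff₀ (by positivity)]
  calc 2 * (k * t * log D) * (4 * D) = 16 * D * log D * (k * t / 2) := by ring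
    _ ≤ 16 * D * log D * (k * (t - 1)) := by gcongr; nlinarith
    _ < k * Δ * (k * (t - 1)) := mul_lt_mul_of_pos_right h16 (by nlinarith)

lemma sum_degree_bound_le {t Δ D : ℕ} (ht : 0 < t) (hD : 0 < D) (htD : (t * D : ℝ) ≤ exp (Δ / 6)) :
    ∑ v : Fin t × Fin D,
      (1 + (Δ : ℝ) / (2 * D * t)) ^ (completeMultipartiteProd (Fin t) (Fin D)).degree v
        / 2 ^ (Δ + 1) ≤ 1 / 2 := by
  set K := completeMultipartiteProd (Fin t) (Fin D)
  set p : ℝ := Δ / (2 * D * t) with hp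
  have hterm : ∀ v, (1 + p) ^ K.degree v ≤ exp (Δ / 2) := by
    intro v
    have hdeg : (K.degree v : ℝ) ≤ t * D := by
      have := K.degree_lt_card_verts v
      simp only [Fintype.card_prod, Fintype.card_fin] at this
      exact_mod_cast this.le
    calc (1 + p) ^ K.degree v ≤ exp p ^ K.degree v :=
          pow_le_pow_left₀ (by positivity) (by linarith [add_one_le_exp p]) _
      _ = exp (K.degree v * p) := (exp_nat_mul p _).symm
      _ ≤ exp (t * D * p) := exp_le_exp.2 (by gcongr)
      _ = exp (Δ / 2) := by rw [hp]; field_simp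
  calc ∑ v : Fin t × Fin D, (1 + p) ^ K.degree v / 2 ^ (Δ + 1)
      ≤ ∑ _v : Fin t × Fin D, exp (Δ / 2) / 2 ^ (Δ + 1) :=
        sum_le_sum fun v _ ↦ by gcongr; exact hterm v
    _ = t * D * exp (Δ / 2) / 2 ^ (Δ + 1) := by simp; ring
    _ ≤ exp (Δ / 6) * exp (Δ / 2) / 2 ^ (Δ + 1) := by gcongr
    _ = exp (2 / 3 * Δ) / 2 ^ Δ / 2 := by rw [← exp_add, pow_succ]; ring_nf
    _ ≤ 1 / 2 := by
        gcongr
        exact div_le_one_of_le₀ (exp_mul_le_two_pow Δ) (by positivity)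

lemma sum_transversal_bound_lt {k t D : ℕ} {p : ℝ} (hk : 1 ≤ k) (ht : 1 ≤ t) (hD2 : 2 ≤ D)
    (hp1 : p ≤ 1) (hpM : 2 * (k * t * log D) < p * (t * k * ((t - 1) * k) / 2)) :
    ∑ S ∈ transversals (Fin t) (Fin D) k,
      (1 - p) ^ #((completeMultipartiteProd (Fin t) (Fin D)).edgeFinset ∩ S.sym2) < 1 / 2 := by
  set K := completeMultipartiteProd (Fin t) (Fin D)
  set M : ℝ := t * k * ((t - 1) * k) / 2 with hM
  have hlog2 : log 2 ≤ log D := log_le_log two_pos (by exact_mod_cast hD2)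
  have hterm : ∀ S ∈ transversals (Fin t) (Fin D) k,
      (1 - p) ^ #(K.edgeFinset ∩ S.sym2) ≤ exp (-(p * M)) := by
    intro S hS
    have hm : (#(K.edgeFinset ∩ S.sym2) : ℝ) = M := by
      have hcount := congrArg (Nat.cast (R := ℝ))
        (two_mul_card_edgeFinset_inter_sym2_of_mem_transversals hS)
      push_cast [Fintype.card_fin, Nat.cast_sub ht] at hcount
      linarith
    calc (1 - p) ^ #(K.edgeFinset ∩ S.sym2) ≤ exp (-p) ^ #(K.edgeFinset ∩ S.sym2) :=
          pow_le_pow_left₀ (by linarith) (one_sub_le_exp_neg p) _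
      _ = exp (-(p * M)) := by
          rw [← exp_nat_mul, hm, mul_neg, mul_comm]
  have hcard : (#(transversals (Fin t) (Fin D) k) : ℝ) ≤ exp (k * t * log D) := by
    rw [← log_rpow (by positivity), exp_log (by positivity), ← Nat.cast_mul, rpow_natCast]
    exact_mod_cast by simpa using card_transversals_le (ι := Fin t) (β := Fin D) k
  calc _ ≤ ∑ _S ∈ transversals (Fin t) (Fin D) k, exp (-(p * M)) := sum_le_sum hterm
    _ = #(transversals (Fin t) (Fin D) k) * exp (-(p * M)) := by rw [sum_const, nsmul_eq_mul]
    _ ≤ exp (k * t * log D) * exp (-(p * M)) := by gcongr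
    _ < exp (-(k * t * log D)) := by
        rw [← exp_add]
        exact exp_lt_exp.2 (by linarith)
    _ ≤ exp (-log 2) := by
        refine exp_le_exp.2 (neg_le_neg (hlog2.trans (le_mul_of_one_le_left
          ((log_nonneg one_le_two).trans hlog2) ?_)))
        exact_mod_cast Nat.one_le_iff_ne_zero.2 (by positivity)
    _ = 1 / 2 := by rw [exp_neg, exp_log two_pos, one_div]

end Estimates

/-- There exists a graph on `t` parts of size `D`, each part independent, with
maximum degree at most `Δ`, containing no `k`-independent transversal, provided
`Δ ≥ 64 + 12·ln(kt)` and `D < kΔ/(16·ln D)`. -/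
theorem stmt14 (k t Δ D : ℕ) (hk : 2 ≤ k) (ht : 2 ≤ t) (hD4 : 4 ≤ D)
    (hΔ : (64 : ℝ) + 12 * Real.log ((k : ℝ) * t) ≤ Δ)
    (hD : (D : ℝ) < (k : ℝ) * Δ / (16 * Real.log D)) :
    ∃ H : SimpleGraph (Fin t × Fin D),
      (∀ (i : Fin t) (a b : Fin D), ¬ H.Adj (i, a) (i, b)) ∧
      (∀ v, (H.neighborSet v).ncard ≤ Δ) ∧
      ¬ ∃ S : Finset (Fin t × Fin D),
          (∀ a ∈ S, ∀ b ∈ S, ¬ H.Adj a b) ∧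
          ∀ i : Fin t, (S.filter fun p => p.1 = i).card = k := by
  set K := completeMultipartiteProd (Fin t) (Fin D)
  have hparts : ∀ H ≤ K, ∀ (i : Fin t) (a b : Fin D), ¬ H.Adj (i, a) (i, b) :=
    fun H hHK i a b hab ↦ completeMultipartiteProd_adj.1 (hHK hab) rfl
  have hno : ∀ H : SimpleGraph (Fin t × Fin D),
      (∀ S ∈ transversals (Fin t) (Fin D) k, ¬ H.IsIndepSet S) →
      ¬ ∃ S : Finset (Fin t × Fin D), (∀ a ∈ S, ∀ b ∈ S, ¬ H.Adj a b) ∧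
        ∀ i : Fin t, (S.filter fun p => p.1 = i).card = k := by
    rintro H hH ⟨S, hSind, hScard⟩
    exact hH S (by simpa [transversals] using hScard) fun a ha b hb _ ↦ hSind a ha b hb
  by_cases hsparse : (Δ : ℝ) ≤ 2 * D * t
  · have hp1 : (Δ : ℝ) / (2 * D * t) ≤ 1 := (div_le_one (by positivity)).2 hsparse
    have hdeg := sum_degree_bound_le (by omega) (by omega)
      (mul_le_exp_div_six (by omega) (by omega) (by omega) hΔ hD)
    have htr := sum_transversal_bound_lt (by omega) (by omega) (by omega) hp1
      (two_mul_log_lt (by omega) ht (by omega) hD)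
    obtain ⟨H, hHK, hdeg, hind⟩ := K.exists_le_ncard_neighborSet_le_not_isIndepSet
      (by positivity) hp1 Δ (transversals (Fin t) (Fin D) k) (by linarith)
    exact ⟨H, hparts H hHK, hdeg, hno H hind⟩
  · refine ⟨K, hparts K le_rfl, fun v ↦ ?_,
      hno K fun S hS ↦ not_isIndepSet_of_mem_transversals (by omega) (by simpa) hS⟩
    calc (K.neighborSet v).ncard ≤ Nat.card (Fin t × Fin D) := Set.ncard_le_card _
      _ = t * D := by simp
      _ ≤ Δ := by exact_mod_cast (by push_cast; nlinarith : ((t * D : ℕ) : ℝ) ≤ Δ)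
end

section
/- Key counting step of the transversal lower bound: for integers k ≥ 2, t ≥ 2, D ≥ 4 with D < kΔ/(16 ln D) and p = Δ/(2Dt), one has exp(−p·k²·t(t−1)/2) ≤ D^{−2kt}; consequently (number of candidate transversal sets)·(prob. a fixed one is independent) ≤ C(D,k)^t · D^{−2kt} < D^{kt}·D^{−2kt} = D^{−kt}. -/
/-!
A fixed transversal choice of `k` vertices in each of the `t` parts spans `C(t,2)·k²` potential
edges, so it is independent with probability `(1 - p)^{C(t,2)k²} ≤ exp(-p k² t(t-1)/2)`. With
`p = Δ/(2Dt)` this exponent equals `k²(t-1)Δ/(4D)`, which the hypothesis `16 D ln D < kΔ` pushes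
above `4k(t-1) ln D ≥ 2kt ln D`. Since there are at most `C(D,k)^t < D^{kt}` such choices, the
union bound is `< D^{kt} · D^{-2kt} = D^{-kt}`.
-/

open Real

lemma one_sub_pow_le_exp_neg_mul {p : ℝ} (hp : p ≤ 1) (n : ℕ) :
    (1 - p) ^ n ≤ exp (-p * n) :=
  calc (1 - p) ^ n ≤ exp (-p) ^ n := pow_le_pow_left₀ (by linarith) (one_sub_le_exp_neg p) n
    _ = exp (-p * n) := by rw [← exp_nat_mul, mul_comm]

lemma exp_neg_le_rpow_neg_of_mul_log_le {D a x : ℝ} (hD : 0 < D) (h : a * log D ≤ x) :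
    exp (-x) ≤ D ^ (-a) := by
  rw [rpow_def_of_pos hD, exp_le_exp]
  linarith

lemma two_mul_mul_mul_le_of_sixteen_mul_le {k t D Δ L : ℝ} (hk : 0 < k) (ht : 2 ≤ t)
    (hD : 0 < D) (hL : 0 ≤ L) (hΔ : 16 * D * L ≤ k * Δ) :
    2 * k * t * L ≤ Δ / (2 * D * t) * k ^ 2 * (t * (t - 1)) / 2 := by
  have hexp : Δ / (2 * D * t) * k ^ 2 * (t * (t - 1)) / 2 = k * Δ * (k * (t - 1)) / (4 * D) := by
    field_simp
    ring
  have hkt : 0 ≤ k * (t - 1) := by nlinarith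
  rw [hexp, le_div_iff₀ (by positivity)]
  calc 2 * k * t * L * (4 * D) ≤ 16 * D * L * (k * (t - 1)) := by
        nlinarith [mul_nonneg (mul_nonneg (mul_nonneg hD.le hL) hk.le) (sub_nonneg.2 ht)]
    _ ≤ k * Δ * (k * (t - 1)) := mul_le_mul_of_nonneg_right hΔ hkt

lemma choose_pow_mul_rpow_lt {D k t : ℕ} (hD : D ≠ 0) (hk : 2 ≤ k) (ht : t ≠ 0) :
    (D.choose k : ℝ) ^ t * (D : ℝ) ^ (-(2 * (k : ℝ) * t)) < (D : ℝ) ^ (-((k : ℝ) * t)) := by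
  have hDpos : (0 : ℝ) < D := by positivity
  have hchoose : (D.choose k : ℝ) ^ t < ((D : ℝ) ^ k) ^ t :=
    pow_lt_pow_left₀ (mod_cast Nat.choose_lt_pow hD hk) (by positivity) ht
  calc (D.choose k : ℝ) ^ t * (D : ℝ) ^ (-(2 * (k : ℝ) * t))
      < ((D : ℝ) ^ k) ^ t * (D : ℝ) ^ (-(2 * (k : ℝ) * t)) :=
        mul_lt_mul_of_pos_right hchoose (rpow_pos_of_pos hDpos _)
    _ = (D : ℝ) ^ (-((k : ℝ) * t)) := by
        rw [← pow_mul, ← rpow_natCast, ← rpow_add hDpos]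
        push_cast
        ring_nf

/-- Key counting step of the transversal lower bound, with `p = Δ/(2Dt)`:
(i) `(1−p)^{C(t,2)·k²} ≤ exp(−p·k²·t(t−1)/2)`;
(ii) `exp(−p·k²·t(t−1)/2) ≤ D^{−2kt}`;
(iii) `C(D,k)^t · D^{−2kt} < D^{−kt}`. -/
theorem stmt15 (k t D : ℕ) (Δ : ℝ) (hk : 2 ≤ k) (ht : 2 ≤ t) (hD4 : 4 ≤ D)
    (hD : (D : ℝ) < (k : ℝ) * Δ / (16 * Real.log D))
    (hp1 : Δ / (2 * D * t) ≤ 1) :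
    (1 - Δ / (2 * D * t)) ^ (Nat.choose t 2 * k ^ 2)
        ≤ Real.exp (-(Δ / (2 * D * t)) * (k : ℝ) ^ 2 * ((t : ℝ) * ((t : ℝ) - 1)) / 2) ∧
    Real.exp (-(Δ / (2 * D * t)) * (k : ℝ) ^ 2 * ((t : ℝ) * ((t : ℝ) - 1)) / 2)
        ≤ (D : ℝ) ^ (-(2 * (k : ℝ) * t)) ∧
    ((D.choose k : ℝ)) ^ t * (D : ℝ) ^ (-(2 * (k : ℝ) * t))
        < (D : ℝ) ^ (-((k : ℝ) * t)) := by
  have hlog : 0 < log D := log_pos (by exact_mod_cast (by omega : 1 < D))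
  have hΔ : 16 * D * log D ≤ k * Δ := by
    rw [lt_div_iff₀ (by positivity)] at hD
    linarith
  refine ⟨?_, ?_, choose_pow_mul_rpow_lt (by omega) hk (by omega)⟩
  · convert one_sub_pow_le_exp_neg_mul hp1 (t.choose 2 * k ^ 2) using 2
    push_cast [Nat.cast_choose_two]
    ring
  · rw [neg_mul, neg_mul, neg_div]
    exact exp_neg_le_rpow_neg_of_mul_log_le (by positivity) <|
      two_mul_mul_mul_le_of_sixteen_mul_le (by positivity) (by exact_mod_cast ht) (by positivity)
        hlog.le hΔ
end
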